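/- For all real a > 0 and b ≥ 0, ∫₀^∞ x^{−1/2} · exp(−(ax + b/x)/2) dx = √(2π/a) · exp(−√(ab)). -/

import Mathlib

/-!
Substituting `x = t²` turns the integral into `2 ∫₀^∞ exp (-(a t² + b / t²) / 2) dt`. Completing
the square, `a t² + b / t² = (√a t - √b / t)² + 2 √(a b)`, and the Cauchy–Schlömilch
transformation evaluates `∫₀^∞ f (α t - β / t) dt = (2 α)⁻¹ ∫ f` for even integrable `f`: the map
`t ↦ α t - β / t` is a diffeomorphism of `(0, ∞)` onto `ℝ` with derivative `α + β / t²`, and the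
inversion `t ↦ (β / α) / t` shows that the two summands of this derivative contribute equally.
What remains is the Gaussian integral.
-/

open Real Set MeasureTheory

variable {E : Type*} [NormedAddCommGroup E] [NormedSpace ℝ E]

section Inversion

variable {c : ℝ}

lemma image_const_div_Ioi_zero (hc : 0 < c) : (c / ·) '' Ioi (0 : ℝ) = Ioi 0 :=
  Subset.antisymm (image_subset_iff.2 fun _ ht => div_pos hc ht)
    fun y hy => ⟨c / y, div_pos hc hy, div_div_cancel₀ hc.ne'⟩

lemma injOn_const_div (hc : c ≠ 0) : InjOn (c / ·) (Ioi (0 : ℝ)) := fun s _ t _ h => by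
  simpa [div_eq_mul_inv, hc] using h

lemma hasDerivAt_const_div {t : ℝ} (ht : t ≠ 0) : HasDerivAt (c / ·) (-(c / t ^ 2)) t := by
  simpa [div_eq_mul_inv, neg_div] using (hasDerivAt_inv ht).const_mul c

theorem integral_Ioi_comp_const_div (g : ℝ → E) (hc : 0 < c) :
    ∫ t in Ioi 0, (c / t ^ 2) • g (c / t) = ∫ t in Ioi 0, g t := by
  conv_rhs => rw [← image_const_div_Ioi_zero hc]
  rw [integral_image_eq_integral_abs_deriv_smul measurableSet_Ioi
    (fun t ht => (hasDerivAt_const_div (ne_of_gt ht)).hasDerivWithinAt) (injOn_const_div hc.ne')]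
  refine setIntegral_congr_fun measurableSet_Ioi fun t ht => ?_
  rw [abs_neg, abs_of_pos (div_pos hc (pow_pos ht 2))]

end Inversion

section Schloemilch

variable {α β : ℝ}

lemma hasDerivAt_mul_sub_div {t : ℝ} (ht : t ≠ 0) :
    HasDerivAt (fun t => α * t - β / t) (α + β / t ^ 2) t := by
  have := ((hasDerivAt_id t).const_mul α).sub (hasDerivAt_const_div (c := β) ht)
  rwa [mul_one, sub_neg_eq_add] at this

lemma strictMonoOn_mul_sub_div (hα : 0 < α) (hβ : 0 ≤ β) :
    StrictMonoOn (fun t => α * t - β / t) (Ioi 0) := fun s hs t _ hst => by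
  have : β / t ≤ β / s := div_le_div_of_nonneg_left hβ hs hst.le
  dsimp only
  nlinarith

lemma image_mul_sub_div_Ioi (hα : 0 < α) (hβ : 0 < β) :
    (fun t => α * t - β / t) '' Ioi 0 = univ := by
  refine eq_univ_of_forall fun y => ?_
  -- the positive root of `α t² - y t - β = 0`
  set s := √(y ^ 2 + 4 * α * β)
  have hs : s ^ 2 = y ^ 2 + 4 * α * β := sq_sqrt (by positivity)
  have hys : 0 < y + s := by
    nlinarith [abs_lt_of_sq_lt_sq' (by nlinarith : y ^ 2 < s ^ 2) (sqrt_nonneg _)]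
  refine ⟨(y + s) / (2 * α), div_pos hys (by positivity), ?_⟩
  field_simp
  nlinarith

theorem integral_Ioi_comp_mul_sub_div (f : ℝ → E) (hα : 0 < α) (hβ : 0 < β) :
    ∫ t in Ioi 0, (α + β / t ^ 2) • f (α * t - β / t) = ∫ u, f u := by
  rw [← setIntegral_univ (f := f), ← image_mul_sub_div_Ioi hα hβ,
    integral_image_eq_integral_abs_deriv_smul measurableSet_Ioi
    (fun t ht => (hasDerivAt_mul_sub_div (ne_of_gt ht)).hasDerivWithinAt)
    (strictMonoOn_mul_sub_div hα hβ.le).injOn]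
  refine setIntegral_congr_fun measurableSet_Ioi fun t ht => ?_
  rw [abs_of_pos (by have := mem_Ioi.1 ht; positivity)]

theorem integrableOn_Ioi_comp_mul_sub_div_iff (f : ℝ → E) (hα : 0 < α) (hβ : 0 < β) :
    IntegrableOn (fun t => (α + β / t ^ 2) • f (α * t - β / t)) (Ioi 0) ↔ Integrable f := by
  rw [← integrableOn_univ, ← image_mul_sub_div_Ioi hα hβ,
    integrableOn_image_iff_integrableOn_abs_deriv_smul measurableSet_Ioi
    (fun t ht => (hasDerivAt_mul_sub_div (ne_of_gt ht)).hasDerivWithinAt)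
    (strictMonoOn_mul_sub_div hα hβ.le).injOn]
  refine integrableOn_congr_fun (fun t ht => ?_) measurableSet_Ioi
  rw [abs_of_pos (by have := mem_Ioi.1 ht; positivity)]

theorem integral_Ioi_comp_mul_sub_div_of_even (f : ℝ → E) (hf : Function.Even f)
    (hfi : Integrable f) (hα : 0 < α) (hβ : 0 < β) :
    ∫ t in Ioi 0, f (α * t - β / t) = (2 * α)⁻¹ • ∫ u, f u := by
  have hweighted := (integrableOn_Ioi_comp_mul_sub_div_iff f hα hβ).2 hfi
  have hweight_pos (t : ℝ) : 0 < α + β / t ^ 2 := by positivity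
  have hαf : IntegrableOn (fun t => α • f (α * t - β / t)) (Ioi 0) := by
    refine (hweighted.bdd_smul 1 (φ := fun t => α / (α + β / t ^ 2))
      (Measurable.aestronglyMeasurable (by fun_prop)) (.of_forall fun t => ?_)).congr
      (.of_forall fun t => ?_)
    · rw [norm_div, Real.norm_of_nonneg hα.le, Real.norm_of_nonneg (hweight_pos t).le,
        div_le_one (hweight_pos t)]
      linarith [div_nonneg hβ.le (sq_nonneg t)]
    · simp only [Pi.smul_apply', smul_smul, div_mul_cancel₀ _ (hweight_pos t).ne']
  -- `t ↦ (β / α) / t` reverses the sign of `α t - β / t`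
  have hsym : ∫ t in Ioi 0, (β / t ^ 2) • f (α * t - β / t)
      = α • ∫ t in Ioi 0, f (α * t - β / t) := by
    rw [← integral_Ioi_comp_const_div _ (div_pos hβ hα), ← integral_smul]
    refine setIntegral_congr_fun measurableSet_Ioi fun t ht => ?_
    have ht : t ≠ 0 := ne_of_gt ht
    have hneg : α * (β / α / t) - β / (β / α / t) = -(α * t - β / t) := by
      field_simp
      ring
    rw [hneg, hf, smul_smul]
    congr 1
    field_simp
  have hsplit : ∫ t in Ioi 0, (β / t ^ 2) • f (α * t - β / t)
      = (∫ t in Ioi 0, (α + β / t ^ 2) • f (α * t - β / t))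
        - ∫ t in Ioi 0, α • f (α * t - β / t) := by
    rw [← integral_sub hweighted hαf]
    simp only [add_smul, add_sub_cancel_left]
  rw [hsplit, integral_Ioi_comp_mul_sub_div f hα hβ, integral_smul, sub_eq_iff_eq_add] at hsym
  rw [eq_inv_smul_iff₀ (by positivity), mul_smul, two_smul, hsym]

end Schloemilch

theorem integral_Ioi_rpow_neg_half_mul (g : ℝ → ℝ) :
    ∫ x in Ioi 0, x ^ (-(1 : ℝ) / 2) * g x = 2 * ∫ t in Ioi 0, g (t ^ 2) := by
  rw [← integral_comp_rpow_Ioi_of_pos two_pos, ← integral_const_mul]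
  refine setIntegral_congr_fun measurableSet_Ioi fun t ht => ?_
  have ht : 0 < t := ht
  rw [smul_eq_mul, ← rpow_mul ht.le, rpow_two]
  norm_num [rpow_neg_one]
  field_simp

theorem integral_exp_neg_mul_sq_add_div_sq {a b : ℝ} (ha : 0 < a) (hb : 0 ≤ b) :
    ∫ t in Ioi 0, exp (-(a * t ^ 2 + b / t ^ 2) / 2) = √(2 * π / a) / 2 * exp (-√(a * b)) := by
  rcases hb.eq_or_lt with rfl | hb
  · have h (t : ℝ) : -(a * t ^ 2 + 0 / t ^ 2) / 2 = -(a / 2) * t ^ 2 := by ring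
    simp only [h, integral_gaussian_Ioi, mul_zero, sqrt_zero, neg_zero, exp_zero, mul_one]
    congr 2
    field_simp
  have hgauss := integral_Ioi_comp_mul_sub_div_of_even (fun u => exp (-(1 / 2) * u ^ 2))
    (fun u => by simp only [neg_sq]) (integrable_exp_neg_mul_sq one_half_pos)
    (sqrt_pos.2 ha) (sqrt_pos.2 hb)
  have hsq : ∀ t ∈ Ioi (0 : ℝ), exp (-(a * t ^ 2 + b / t ^ 2) / 2)
      = exp (-√(a * b)) * exp (-(1 / 2) * (√a * t - √b / t) ^ 2) := by
    intro t ht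
    have ht : t ≠ 0 := ne_of_gt ht
    rw [← exp_add, sqrt_mul ha.le]
    congr 1
    field_simp
    linear_combination (t ^ 4) * sq_sqrt ha.le + sq_sqrt hb.le
  rw [setIntegral_congr_fun measurableSet_Ioi hsq, integral_const_mul, hgauss, integral_gaussian,
    smul_eq_mul, sqrt_div' _ ha.le]
  field_simp

/-- GIG normalizing integral for `p = 1/2`:
`∫₀^∞ x^{−1/2} exp(−(ax + b/x)/2) dx = √(2π/a) exp(−√(ab))`. -/
theorem stmt_5 (a b : ℝ) (ha : 0 < a) (hb : 0 ≤ b) :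
    ∫ x in Ioi (0 : ℝ), x ^ (-(1 : ℝ) / 2) * Real.exp (-(a * x + b / x) / 2)
      = Real.sqrt (2 * π / a) * Real.exp (-Real.sqrt (a * b)) := by
  rw [integral_Ioi_rpow_neg_half_mul fun x => exp (-(a * x + b / x) / 2),
    integral_exp_neg_mul_sq_add_div_sq ha hb]
  ring
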